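/- arXiv:1810.08484 — 4 statements merged into one kernel-verified Lean document; each statement's English description precedes it below -/
import Mathlib

section
/- Weak color-avoiding connectivity is not transitive: there exists a vertex-colored connected graph and vertices u, v, w such that u and v are weakly color-avoiding connected, v and w are weakly color-avoiding connected, but u and w are not weakly color-avoiding connected. -/
/-- `u` and `v` are weakly `i`-avoiding connected. -/
def WeaklyAvoids {V C : Type} (G : SimpleGraph V) (c : V → C) (i : C) (u v : V) : Prop :=
  c u = i ∨ c v = i ∨ ∃ p : G.Walk u v, ∀ x ∈ p.support, c x ≠ i

/-!
On the path `0 - 1 - 2` coloured `false, true, false`, each of the pairs `{0, 1}` and `{1, 2}`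
carries both colours, so they are weakly colour-avoiding connected for trivial reasons. But every
walk from `0` to `2` passes through the vertex `1`, so `0` and `2` are not weakly `true`-avoiding
connected.
-/

open SimpleGraph

theorem SimpleGraph.hasse.mem_support_of_le_of_le {α : Type*} [LinearOrder α] {a b k : α}
    (p : (hasse α).Walk a b) (hak : a ≤ k) (hkb : k ≤ b) : k ∈ p.support := by
  induction p with
  | nil => simp [le_antisymm hak hkb]
  | @cons a a' b hadj q ih =>
    rcases hak.eq_or_lt with rfl | hak
    · exact Walk.start_mem_support _
    · have ha'k : a' ≤ k := by
        rcases hasse_adj.mp hadj with hcov | hcov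
        · exact not_lt.mp fun hka' => hcov.2 hak hka'
        · exact (hcov.lt.trans hak).le
      exact List.mem_cons_of_mem _ (ih ha'k hkb)

theorem not_weaklyAvoids_of_forall_mem_support {V C : Type} {G : SimpleGraph V} {c : V → C}
    {u w x : V} (hsep : ∀ p : G.Walk u w, x ∈ p.support) (hu : c u ≠ c x) (hw : c w ≠ c x) :
    ¬ WeaklyAvoids G c (c x) u w := by
  rintro (hu' | hw' | ⟨p, hp⟩)
  exacts [hu hu', hw hw', hp x (hsep p) rfl]

/-- Weak color-avoiding connectivity is not transitive. -/
theorem weak_not_transitive :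
    ∃ (V : Type) (G : SimpleGraph V) (C : Type) (c : V → C) (u v w : V),
      G.Connected ∧
      (∀ i : C, WeaklyAvoids G c i u v) ∧
      (∀ i : C, WeaklyAvoids G c i v w) ∧
      ¬ (∀ i : C, WeaklyAvoids G c i u w) := by
  let c : Fin 3 → Bool := ![false, true, false]
  refine ⟨Fin 3, pathGraph 3, Bool, c, 0, 1, 2, pathGraph_connected 2, ?_, ?_, ?_⟩
  · rintro (_ | _) <;> simp [WeaklyAvoids, c]
  · rintro (_ | _) <;> simp [WeaklyAvoids, c]
  · have hsep (p : (pathGraph 3).Walk 0 2) : (1 : Fin 3) ∈ p.support :=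
      hasse.mem_support_of_le_of_le p (by decide) (by decide)
    exact fun h => not_weaklyAvoids_of_forall_mem_support hsep (by decide) (by decide) (h (c 1))
end

section
/- Let G be a vertex-colored graph and G' the graph on V(G) where two vertices are adjacent iff they are weakly color-avoiding connected in G. Then G' contains no induced wheel on at least five vertices; equivalently, G' is locally chordal. -/
/-- `u` and `v` are weakly color-avoiding connected: they are in the same component
and weakly `i`-avoiding connected for every color `i`. -/
def WeaklyCAConnected {V C : Type} (G : SimpleGraph V) (c : V → C) (u v : V) : Prop :=
  G.Reachable u v ∧ ∀ i : C, WeaklyAvoids G c i u v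

/-- The derived graph `G'`: adjacency is weak color-avoiding connectivity. -/
def weakGraph {V C : Type} (G : SimpleGraph V) (c : V → C) : SimpleGraph V where
  Adj u v := u ≠ v ∧ WeaklyCAConnected G c u v
  symm := by
    constructor
    rintro u v ⟨h, hr, hw⟩
    refine ⟨h.symm, hr.symm, fun i => ?_⟩
    rcases hw i with h1 | h1 | ⟨p, hp⟩
    · exact Or.inr (Or.inl h1)
    · exact Or.inl h1
    · exact Or.inr (Or.inr ⟨p.reverse, fun x hx => hp x (by simpa using hx)⟩)
  loopless := by
    constructor
    rintro u ⟨h, -⟩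
    exact h rfl

/-- The set `s` carries an induced cycle of length at least 4 in `G`. -/
def HasInducedLongCycleOn {V : Type} (G : SimpleGraph V) (s : Set V) : Prop :=
  ∃ n : ℕ, 4 ≤ n ∧ ∃ w : ZMod n → V, Function.Injective w ∧
    (∀ j, w j ∈ s) ∧
    (∀ j, G.Adj (w j) (w (j + 1))) ∧
    (∀ j k, k ≠ j → k ≠ j + 1 → k + 1 ≠ j → ¬ G.Adj (w j) (w k))

/-- `G` is locally chordal. -/
def LocallyChordal {V : Type} (G : SimpleGraph V) : Prop :=
  ∀ u : V, ¬ HasInducedLongCycleOn G (G.neighborSet u)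

/-- `G` contains an induced wheel on at least five vertices. -/
def HasInducedWheel {V : Type} (G : SimpleGraph V) : Prop :=
  ∃ l : ℕ, 4 ≤ l ∧ ∃ (u : V) (w : ZMod l → V), Function.Injective w ∧
    (∀ j, w j ≠ u) ∧
    (∀ j, G.Adj u (w j)) ∧
    (∀ j, G.Adj (w j) (w (j + 1))) ∧
    (∀ j k, k ≠ j → k ≠ j + 1 → k + 1 ≠ j → ¬ G.Adj (w j) (w k))

/-!
If `x` and `y` are non-adjacent neighbours of `u` in `G'`, then every colour `i ≠ c u` is
avoided between them by joining `i`-avoiding walks through `u`, so `c u` is the only colour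
separating `x` from `y`; in particular `c x ≠ c u`. On an induced cycle `w₀ w₁ w₂ w₃ …` of
length at least 4 in the neighbourhood of `u`, this separates `w₀` from `w₂` and, from the
pair `w₁, w₃`, gives `c w₁ ≠ c u`. But then the `c u`-avoiding walks `w₀ – w₁` and `w₁ – w₂`
supplied by the cycle edges join to one from `w₀` to `w₂`.
-/

section WeaklyAvoids

variable {V C : Type} {G : SimpleGraph V} {c : V → C} {i : C} {u v w : V}

theorem WeaklyAvoids.symm (h : WeaklyAvoids G c i u v) : WeaklyAvoids G c i v u := by
  rcases h with hu | hv | ⟨p, hp⟩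
  · exact Or.inr (Or.inl hu)
  · exact Or.inl hv
  · exact Or.inr (Or.inr ⟨p.reverse, fun x hx => hp x (by simpa using hx)⟩)

theorem WeaklyAvoids.trans (huv : WeaklyAvoids G c i u v) (hvw : WeaklyAvoids G c i v w)
    (hv : c v ≠ i) : WeaklyAvoids G c i u w := by
  rcases huv with hu | hv' | ⟨p, hp⟩
  · exact Or.inl hu
  · exact absurd hv' hv
  rcases hvw with hv' | hw | ⟨q, hq⟩
  · exact absurd hv' hv
  · exact Or.inr (Or.inl hw)
  refine Or.inr (Or.inr ⟨p.append q, fun x hx => ?_⟩)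
  rcases (p.mem_support_append_iff q).1 hx with hx | hx
  exacts [hp x hx, hq x hx]

end WeaklyAvoids

theorem ZMod.natCast_ne_zero_of_pos_of_lt {n k : ℕ} (hk : 0 < k) (hkn : k < n) :
    (k : ZMod n) ≠ 0 := by
  rw [Ne, ZMod.natCast_eq_zero_iff]
  exact fun h => absurd (Nat.le_of_dvd hk h) (by omega)

theorem not_adj_add_two_of_induced {V : Type} {G : SimpleGraph V} {n : ℕ} (hn : 4 ≤ n)
    {w : ZMod n → V} (hind : ∀ j k, k ≠ j → k ≠ j + 1 → k + 1 ≠ j → ¬ G.Adj (w j) (w k))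
    (j : ZMod n) : ¬ G.Adj (w j) (w (j + 2)) := by
  have hk (k : ℕ) (hk₀ : 0 < k) (hkn : k < n) : (k : ZMod n) ≠ 0 :=
    ZMod.natCast_ne_zero_of_pos_of_lt hk₀ hkn
  refine hind j (j + 2) (fun h => hk 2 (by omega) (by omega) ?_)
    (fun h => hk 1 (by omega) (by omega) ?_) (fun h => hk 3 (by omega) (by omega) ?_) <;>
  · push_cast
    linear_combination h

section weakGraph

variable {V C : Type} {G : SimpleGraph V} {c : V → C}

theorem not_weaklyAvoids_of_weakGraph_adj_of_not_adj {u x y : V}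
    (hx : (weakGraph G c).Adj u x) (hy : (weakGraph G c).Adj u y) (hxy : x ≠ y)
    (h : ¬ (weakGraph G c).Adj x y) :
    ¬ WeaklyAvoids G c (c u) x y := by
  obtain ⟨i, hi⟩ : ∃ i, ¬ WeaklyAvoids G c i x y := by
    by_contra! hall
    exact h ⟨hxy, hx.2.1.symm.trans hy.2.1, hall⟩
  obtain rfl : i = c u := by
    by_contra hiu
    exact hi ((hx.2.2 i).symm.trans (hy.2.2 i) (Ne.symm hiu))
  exact hi

theorem weakGraph_adj_of_middle {u a₀ a₁ a₂ a₃ : V} (hu₀ : (weakGraph G c).Adj u a₀)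
    (hu₁ : (weakGraph G c).Adj u a₁) (hu₂ : (weakGraph G c).Adj u a₂)
    (hu₃ : (weakGraph G c).Adj u a₃) (h₀₁ : (weakGraph G c).Adj a₀ a₁)
    (h₁₂ : (weakGraph G c).Adj a₁ a₂) (h₀₂ : a₀ ≠ a₂) (hn₀₂ : ¬ (weakGraph G c).Adj a₀ a₂)
    (h₁₃ : a₁ ≠ a₃) : (weakGraph G c).Adj a₁ a₃ := by
  by_contra hn₁₃
  have hc₁ : c a₁ ≠ c u := fun h =>
    not_weaklyAvoids_of_weakGraph_adj_of_not_adj hu₁ hu₃ h₁₃ hn₁₃ (Or.inl h)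
  exact not_weaklyAvoids_of_weakGraph_adj_of_not_adj hu₀ hu₂ h₀₂ hn₀₂
    ((h₀₁.2.2 (c u)).trans (h₁₂.2.2 (c u)) hc₁)

theorem weakGraph_not_hasInducedLongCycleOn_neighborSet (u : V) :
    ¬ HasInducedLongCycleOn (weakGraph G c) ((weakGraph G c).neighborSet u) := by
  rintro ⟨n, hn, w, hinj, hmem, hcyc, hind⟩
  have h2 : (2 : ZMod n) ≠ 0 := by
    exact_mod_cast ZMod.natCast_ne_zero_of_pos_of_lt (k := 2) (by omega) (by omega)
  refine not_adj_add_two_of_induced hn hind 1 (weakGraph_adj_of_middle (hmem 0) (hmem 1)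
    (hmem 2) (hmem (1 + 2)) ?_ ?_ (hinj.ne h2.symm) ?_ (hinj.ne (by simpa using h2)))
  · simpa using hcyc 0
  · simpa [one_add_one_eq_two] using hcyc 1
  · simpa using not_adj_add_two_of_induced hn hind 0

end weakGraph

theorem LocallyChordal.not_hasInducedWheel {V : Type} {G : SimpleGraph V}
    (h : LocallyChordal G) : ¬ HasInducedWheel G := by
  rintro ⟨l, hl, u, w, hinj, -, hadj, hcyc, hind⟩
  exact h u ⟨l, hl, w, hinj, hadj, hcyc, hind⟩

/-- The weak color-avoiding connectivity graph `G'` contains no induced wheel on at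
least five vertices; equivalently, it is locally chordal. -/
theorem weakGraph_locallyChordal {V C : Type} (G : SimpleGraph V) (c : V → C) :
    LocallyChordal (weakGraph G c) ∧ ¬ HasInducedWheel (weakGraph G c) :=
  have h : LocallyChordal (weakGraph G c) := weakGraph_not_hasInducedLongCycleOn_neighborSet
  ⟨h, h.not_hasInducedWheel⟩
end

section
/- List-coloring construction: let G be a graph on n vertices and assign to every unordered pair {x, y} of distinct vertices a distinct color, placing that color on the list of every vertex other than x and y. Then two vertices u, v are weakly color-avoiding connected (with respect to lists: a vertex is destroyed by color i if i is on its list) if and only if u and v are adjacent in G. Consequently, the weakly color-avoiding connected components equal the maximal cliques of G. -/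
/-- Weak `i`-avoiding connectivity for list colorings: a vertex is destroyed by
color `i` if `i` is on its list. -/
def WeaklyAvoidsL {V C : Type} (G : SimpleGraph V) (L : V → Set C) (i : C) (u v : V) :
    Prop :=
  i ∈ L u ∨ i ∈ L v ∨ ∃ p : G.Walk u v, ∀ x ∈ p.support, i ∉ L x

/-- The list assignment: one color per unordered pair of distinct vertices, placed on
the list of every vertex other than the two members of the pair. -/
def pairList (V : Type) : V → Set (Sym2 V) :=
  fun v => {e | ¬ e.IsDiag ∧ v ∉ e}

lemma pairList_key {V : Type} (G : SimpleGraph V) (u v : V) (huv : u ≠ v) :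
    (∀ i : Sym2 V, WeaklyAvoidsL G (pairList V) i u v) ↔ G.Adj u v := by
  constructor
  · intro h
    have h1 := h s(u, v)
    rcases h1 with h1 | h1 | ⟨p, hp⟩
    · exact absurd (Sym2.mem_mk_left u v) h1.2
    · exact absurd (Sym2.mem_mk_right u v) h1.2
    · cases p with
      | nil => exact absurd rfl huv
      | cons hadj q =>
        rename_i w
        have hw : w ∈ (SimpleGraph.Walk.cons hadj q).support := by
          simp [SimpleGraph.Walk.support_cons]
        have := hp w hw
        simp only [pairList, Set.mem_setOf_eq, not_and, not_not] at this
        have hdiag : ¬ (s(u, v) : Sym2 V).IsDiag := by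
          simp [Sym2.isDiag_iff_proj_eq, huv]
        have hmem : w ∈ (s(u, v) : Sym2 V) := this hdiag
        rcases Sym2.mem_iff.mp hmem with h | h
        · exact absurd (h ▸ hadj) (G.irrefl)
        · exact h ▸ hadj
  · intro hadj i
    by_cases hu : i ∈ pairList V u
    · exact Or.inl hu
    by_cases hv : i ∈ pairList V v
    · exact Or.inr (Or.inl hv)
    refine Or.inr (Or.inr ⟨SimpleGraph.Walk.cons hadj SimpleGraph.Walk.nil, ?_⟩)
    intro x hx
    simp [SimpleGraph.Walk.support_cons] at hx
    rcases hx with rfl | rfl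
    · exact hu
    · exact hv

/-- With the pair-list assignment, two distinct vertices are weakly color-avoiding
connected iff they are adjacent; consequently the weakly color-avoiding connected
components are exactly the maximal cliques of `G`. -/
theorem pairList_weak_iff_adj {V : Type} [Fintype V] (G : SimpleGraph V) :
    (∀ u v : V, u ≠ v →
      ((∀ i : Sym2 V, WeaklyAvoidsL G (pairList V) i u v) ↔ G.Adj u v)) ∧
    (∀ s : Set V,
      Maximal (fun t : Set V =>
        t.Pairwise fun u v => ∀ i : Sym2 V, WeaklyAvoidsL G (pairList V) i u v) s ↔
      Maximal G.IsClique s) := by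
  have heq : (fun t : Set V =>
      t.Pairwise fun u v => ∀ i : Sym2 V, WeaklyAvoidsL G (pairList V) i u v)
      = G.IsClique := by
    funext t
    apply propext
    constructor
    · intro h u hu v hv huv
      exact (pairList_key G u v huv).mp (h hu hv huv)
    · intro h u hu v hv huv
      exact (pairList_key G u v huv).mpr (h hu hv huv)
  refine ⟨fun u v huv => pairList_key G u v huv, fun s => ?_⟩
  rw [heq]
end

section
/- The single-list-coloring reduction preserves adjacency: with the list assignment L(v) = { c_{xy} : v ∉ {x, y} } on a graph G, for any nonadjacent distinct vertices u, v of G there is a color (namely c_{uv}) that is on the list of every vertex except u and v, and hence no u–v path in G of length ≥ 2 can avoid that color; therefore nonadjacent vertices are not weakly color-avoiding connected. -/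
lemma walk_support_pair {V : Type} {G : SimpleGraph V} {u v : V} (p : G.Walk u v)
    (h : ∀ x ∈ p.support, x = u ∨ x = v) : u = v ∨ G.Adj u v := by
  cases p with
  | nil => exact Or.inl rfl
  | cons hadj q =>
      rename_i w
      have hw : w = u ∨ w = v := h w (by simp)
      rcases hw with rfl | rfl
      · exact absurd hadj (G.irrefl)
      · exact Or.inr hadj

lemma not_mem_pairList {V : Type} {u v x : V} (hne : u ≠ v)
    (h : s(u, v) ∉ pairList V x) : x = u ∨ x = v := by
  simp only [pairList, Set.mem_setOf_eq, Sym2.isDiag_iff_proj_eq, Sym2.mem_iff,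
    not_and, not_not] at h
  exact h hne

/-- For nonadjacent distinct vertices `u, v`: the color `s(u,v)` is on the list of
every vertex other than `u` and `v`; no `u`–`v` path of length at least 2 avoids this
color; hence `u` and `v` are not weakly color-avoiding connected. -/
theorem pairList_nonadjacent {V : Type} [Fintype V] (G : SimpleGraph V)
    (u v : V) (hne : u ≠ v) (hadj : ¬ G.Adj u v) :
    (∀ x : V, x ≠ u → x ≠ v → s(u, v) ∈ pairList V x) ∧
    (∀ p : G.Walk u v, p.IsPath → 2 ≤ p.length →
      ∃ x ∈ p.support, s(u, v) ∈ pairList V x) ∧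
    ¬ (∀ i : Sym2 V, WeaklyAvoidsL G (pairList V) i u v) := by
  refine ⟨?_, ?_, ?_⟩
  · intro x hxu hxv
    refine ⟨by simpa [Sym2.isDiag_iff_proj_eq] using hne, ?_⟩
    simp [Sym2.mem_iff, hxu, hxv]
  · intro p _ _
    by_contra hcon
    push_neg at hcon
    have := walk_support_pair p (fun x hx => not_mem_pairList hne (hcon x hx))
    tauto
  · intro h
    rcases h s(u, v) with hu | hv | ⟨p, hp⟩
    · exact hu.2 (by simp)
    · exact hv.2 (by simp)
    · have := walk_support_pair p (fun x hx => not_mem_pairList hne (hp x hx))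
      tauto
end
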